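/- For x, y, z in Q_{n-1}, the associator in Q_n satisfies [(x,0),(y,0),(z,1)] = [x,y]·[z,y,x], where [·,·] is the commutator and [·,·,·] the associator in Q_{n-1}. -/

import Mathlib

/-- The underlying set of the Cayley-Dickson loop `Q n`:
`Q 0 = {±1}` (encoded as `Bool`, `false = 1`, `true = -1`) and `Q (n+1) = Q n × Bool`,
an element `(x, b)` encoding `(x, 0)` if `b = false` and `(x, 1)` if `b = true`. -/
def Q : ℕ → Type
  | 0 => Bool
  | n+1 => Q n × Bool

namespace Q

def one : ∀ n, Q n
  | 0 => false
  | n+1 => (one n, false)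

def neg : ∀ n, Q n → Q n
  | 0, x => !x
  | n+1, (x, b) => (neg n x, b)

def conj : ∀ n, Q n → Q n
  | 0, x => x
  | n+1, (x, false) => (conj n x, false)
  | n+1, (x, true) => (neg n x, true)

/-- Cayley-Dickson doubling multiplication restricted to the loop:
`(x,0)(y,0) = (xy,0)`, `(x,0)(y,1) = (yx,1)`, `(x,1)(y,0) = (xy*,1)`, `(x,1)(y,1) = (-y*x,0)`. -/
def mul : ∀ n, Q n → Q n → Q n
  | 0, x, y => xor x y
  | n+1, (x, false), (y, false) => (mul n x y, false)
  | n+1, (x, false), (y, true)  => (mul n y x, true)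
  | n+1, (x, true),  (y, false) => (mul n x (conj n y), true)
  | n+1, (x, true),  (y, true)  => (neg n (mul n (conj n y) x), false)

instance (n : ℕ) : One (Q n) := ⟨one n⟩
instance (n : ℕ) : Neg (Q n) := ⟨neg n⟩
instance (n : ℕ) : Mul (Q n) := ⟨mul n⟩
instance (n : ℕ) : Star (Q n) := ⟨conj n⟩
/-- In `Q n` the inverse of `x` is its conjugate `x*`. -/
instance (n : ℕ) : Inv (Q n) := ⟨conj n⟩

instance instDecEq : ∀ n, DecidableEq (Q n)
  | 0 => inferInstanceAs (DecidableEq Bool)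
  | n+1 => letI := instDecEq n; inferInstanceAs (DecidableEq (Q n × Bool))

instance instFintype : ∀ n, Fintype (Q n)
  | 0 => inferInstanceAs (Fintype Bool)
  | n+1 => letI := instFintype n; inferInstanceAs (Fintype (Q n × Bool))

/-- Powers in `Q n` (well defined by diassociativity). -/
def pow {n : ℕ} (x : Q n) : ℕ → Q n
  | 0 => 1
  | k+1 => x * pow x k

/-- The embedding `x ↦ (x, 0)` of `Q n` into `Q (n+1)`. -/
def up {n : ℕ} (x : Q n) : Q (n+1) := (x, false)

/-- The map `x ↦ (x, 1)` from `Q n` into `Q (n+1)`. -/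
def up1 {n : ℕ} (x : Q n) : Q (n+1) := (x, true)

/-- The commutator `[x,y]`, defined by `xy = (yx)[x,y]`. -/
def comm {n : ℕ} (x y : Q n) : Q n := (y * x)⁻¹ * (x * y)

/-- The associator `[x,y,z]`, defined by `(xy)z = (x(yz))[x,y,z]`. -/
def assoc {n : ℕ} (x y z : Q n) : Q n := (x * (y * z))⁻¹ * ((x * y) * z)

/-- A subloop of the Cayley-Dickson loop `Q n`: a subset containing `1` and closed
under multiplication and inverses (= conjugates). -/
structure Subloop (n : ℕ) where
  carrier : Set (Q n)
  one_mem : (1 : Q n) ∈ carrier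
  mul_mem : ∀ ⦃x y : Q n⦄, x ∈ carrier → y ∈ carrier → x * y ∈ carrier
  inv_mem : ∀ ⦃x : Q n⦄, x ∈ carrier → x⁻¹ ∈ carrier

/-- The subloop of `Q n` generated by a set `s`. -/
def closure (n : ℕ) (s : Set (Q n)) : Set (Q n) :=
  ⋂₀ {t : Set (Q n) | s ⊆ t ∧ (1 : Q n) ∈ t ∧
      (∀ x ∈ t, ∀ y ∈ t, x * y ∈ t) ∧ (∀ x ∈ t, x⁻¹ ∈ t)}

end Q

/-!
Expanding the doubling formulas gives `[(x,0),(y,0),(z,1)] = ((z(xy))⁻¹((zy)x), 0)`, which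
differs from `[z,y,x] = (z(yx))⁻¹((zy)x)` only in having `xy` in place of `yx`. Any two elements
of `Q n` commute or anticommute, and a sign passes through products and inverses, so the
discrepancy is exactly the commutator `[x,y] = ±1`.
-/

namespace Q

variable {n : ℕ}

theorem up_or_up1 (p : Q (n + 1)) : (∃ a, p = up a) ∨ ∃ a, p = up1 a := by
  obtain ⟨a, _ | _⟩ := p
  exacts [.inl ⟨a, rfl⟩, .inr ⟨a, rfl⟩]

@[simp] theorem one_succ : (1 : Q (n + 1)) = up 1 := rfl

@[simp] theorem neg_up (a : Q n) : -up a = up (-a) := rfl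

@[simp] theorem neg_up1 (a : Q n) : -up1 a = up1 (-a) := rfl

@[simp] theorem inv_up (a : Q n) : (up a)⁻¹ = up a⁻¹ := rfl

@[simp] theorem inv_up1 (a : Q n) : (up1 a)⁻¹ = up1 (-a) := rfl

@[simp] theorem up_mul_up (a b : Q n) : up a * up b = up (a * b) := rfl

@[simp] theorem up_mul_up1 (a b : Q n) : up a * up1 b = up1 (b * a) := rfl

@[simp] theorem up1_mul_up (a b : Q n) : up1 a * up b = up1 (a * b⁻¹) := rfl

@[simp] theorem up1_mul_up1 (a b : Q n) : up1 a * up1 b = up (-(b⁻¹ * a)) := rfl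

@[simp] protected theorem neg_neg : ∀ {n} (a : Q n), -(-a) = a
  | 0 => by decide
  | _ + 1 => fun p => by rcases up_or_up1 p with ⟨a, rfl⟩ | ⟨a, rfl⟩ <;> simp [Q.neg_neg a]

@[simp] protected theorem inv_neg : ∀ {n} (a : Q n), (-a)⁻¹ = -a⁻¹
  | 0 => by decide
  | _ + 1 => fun p => by rcases up_or_up1 p with ⟨a, rfl⟩ | ⟨a, rfl⟩ <;> simp [Q.inv_neg a]

@[simp] protected theorem inv_one : ∀ {n}, (1 : Q n)⁻¹ = 1
  | 0 => rfl
  | _ + 1 => by simp [Q.inv_one]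

@[simp] protected theorem mul_one : ∀ {n} (a : Q n), a * 1 = a
  | 0 => by decide
  | _ + 1 => fun p => by rcases up_or_up1 p with ⟨a, rfl⟩ | ⟨a, rfl⟩ <;> simp [Q.mul_one a]

@[simp] protected theorem one_mul : ∀ {n} (a : Q n), 1 * a = a
  | 0 => by decide
  | _ + 1 => fun p => by rcases up_or_up1 p with ⟨a, rfl⟩ | ⟨a, rfl⟩ <;> simp [Q.one_mul a]

theorem neg_mul_and_mul_neg : ∀ {n} (a b : Q n), -a * b = -(a * b) ∧ a * -b = -(a * b)
  | 0 => by decide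
  | _ + 1 => fun p q => by
    rcases up_or_up1 p with ⟨a, rfl⟩ | ⟨a, rfl⟩ <;> rcases up_or_up1 q with ⟨b, rfl⟩ | ⟨b, rfl⟩ <;>
      simp [(neg_mul_and_mul_neg _ _).1, (neg_mul_and_mul_neg _ _).2]

@[simp] protected theorem neg_mul (a b : Q n) : -a * b = -(a * b) := (neg_mul_and_mul_neg a b).1

@[simp] protected theorem mul_neg (a b : Q n) : a * -b = -(a * b) := (neg_mul_and_mul_neg a b).2

@[simp] protected theorem inv_mul_self : ∀ {n} (a : Q n), a⁻¹ * a = 1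
  | 0 => by decide
  | _ + 1 => fun p => by rcases up_or_up1 p with ⟨a, rfl⟩ | ⟨a, rfl⟩ <;> simp [Q.inv_mul_self a]

theorem inv_eq_self_or_neg : ∀ {n} (a : Q n), a⁻¹ = a ∨ a⁻¹ = -a
  | 0 => by decide
  | _ + 1 => fun p => by
    rcases up_or_up1 p with ⟨a, rfl⟩ | ⟨a, rfl⟩
    · rcases inv_eq_self_or_neg a with h | h <;> simp [h]
    · simp

theorem mul_comm_or_neg : ∀ {n} (a b : Q n), a * b = b * a ∨ a * b = -(b * a)
  | 0 => by decide
  | _ + 1 => fun p q => by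
    rcases up_or_up1 p with ⟨a, rfl⟩ | ⟨a, rfl⟩ <;> rcases up_or_up1 q with ⟨b, rfl⟩ | ⟨b, rfl⟩
    · rcases mul_comm_or_neg a b with h | h <;> simp [h]
    · rcases inv_eq_self_or_neg a with h | h <;> simp [h]
    · rcases inv_eq_self_or_neg b with h | h <;> simp [h]
    · rcases inv_eq_self_or_neg a with ha | ha <;> rcases inv_eq_self_or_neg b with hb | hb <;>
        rcases mul_comm_or_neg a b with h | h <;> simp [ha, hb, h]

theorem comm_eq_one_of_mul_comm {a b : Q n} (h : a * b = b * a) : comm a b = 1 := by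
  rw [comm, h, Q.inv_mul_self]

theorem comm_eq_neg_one_of_mul_eq_neg {a b : Q n} (h : a * b = -(b * a)) : comm a b = -1 := by
  rw [comm, h, Q.mul_neg, Q.inv_mul_self]

end Q

/-- For `x, y, z ∈ Q n`, the associator in `Q (n+1)` satisfies
`[(x,0),(y,0),(z,1)] = [x,y]·[z,y,x]`, where `[·,·]` is the commutator and `[·,·,·]`
the associator in `Q n`. -/
theorem Q.assoc_up_up_up1 (n : ℕ) (x y z : Q n) :
    Q.assoc (Q.up x) (Q.up y) (Q.up1 z) = Q.up (Q.comm x y * Q.assoc z y x) := by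
  have expand : assoc (up x) (up y) (up1 z) = up ((z * (x * y))⁻¹ * (z * y * x)) := by
    simp [assoc]
  rw [expand, assoc]
  rcases mul_comm_or_neg x y with h | h
  · rw [comm_eq_one_of_mul_comm h, Q.one_mul, h]
  · rw [comm_eq_neg_one_of_mul_eq_neg h, Q.neg_mul, Q.one_mul, h, Q.mul_neg, Q.inv_neg, Q.neg_mul]
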